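/- Let R be a ring in which every prime two-sided ideal is completely prime, and let x be a frame homomorphism Rad(R) → 2 from the frame of radical two-sided ideals to the two-element frame. Then the radical ideal I_x := ⨆ {I ∈ Rad(R) | x(I) = 0} is a prime two-sided ideal of R. -/
import Mathlib


/-- A two-sided ideal `P` is prime if it is proper and for all two-sided ideals `A`, `B`,
`A·B ⊆ P` (i.e. all products `a*b`, `a ∈ A`, `b ∈ B`, lie in `P`) implies `A ⊆ P` or `B ⊆ P`. -/
def TwoSidedIdeal.IsPrimeTS {R : Type*} [Ring R] (P : TwoSidedIdeal R) : Prop :=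
  P ≠ ⊤ ∧ ∀ A B : TwoSidedIdeal R, (∀ a ∈ A, ∀ b ∈ B, a * b ∈ P) → A ≤ P ∨ B ≤ P

/-- A two-sided ideal `P` is completely prime if `a*b ∈ P` implies `a ∈ P` or `b ∈ P`. -/
def TwoSidedIdeal.IsCompletelyPrimeTS {R : Type*} [Ring R] (P : TwoSidedIdeal R) : Prop :=
  P ≠ ⊤ ∧ ∀ a b : R, a * b ∈ P → a ∈ P ∨ b ∈ P

/-- The radical of a two-sided ideal: the intersection of all prime two-sided ideals
containing it (equal to `⊤ = R` if no prime contains it). -/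
def TwoSidedIdeal.radTS {R : Type*} [Ring R] (I : TwoSidedIdeal R) : TwoSidedIdeal R :=
  sInf {P : TwoSidedIdeal R | P.IsPrimeTS ∧ I ≤ P}

/-- A point of the frame of radical two-sided ideals (a frame homomorphism `Rad(R) → 2`),
described as a predicate on two-sided ideals (only its values on radical ideals matter):
it preserves the top element, binary meets (= intersections) of radical ideals, and
arbitrary joins (= radicals of generated ideals) of radical ideals. -/
def IsRadPointTS {R : Type*} [Ring R] (p : TwoSidedIdeal R → Prop) : Prop :=
  p ⊤ ∧
  (∀ A B : TwoSidedIdeal R, A.radTS = A → B.radTS = B → (p (A ⊓ B) ↔ p A ∧ p B)) ∧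
  (∀ S : Set (TwoSidedIdeal R), (∀ I ∈ S, I.radTS = I) →
    (p (sSup S).radTS ↔ ∃ I ∈ S, p I))

namespace TwoSidedIdeal

variable {R : Type*} [Ring R]

lemma le_radTS (I : TwoSidedIdeal R) : I ≤ I.radTS := le_sInf fun _ hP => hP.2

lemma radTS_mono {I J : TwoSidedIdeal R} (h : I ≤ J) : I.radTS ≤ J.radTS :=
  le_sInf fun P hP => sInf_le ⟨hP.1, h.trans hP.2⟩

lemma radTS_le_of_prime {I P : TwoSidedIdeal R} (hP : P.IsPrimeTS) (h : I ≤ P) :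
    I.radTS ≤ P := sInf_le ⟨hP, h⟩

lemma radTS_idem (I : TwoSidedIdeal R) : I.radTS.radTS = I.radTS := by
  unfold radTS
  congr 1
  ext P
  constructor
  · rintro ⟨h1, h2⟩; exact ⟨h1, (le_sInf fun _ hQ => hQ.2).trans h2⟩
  · rintro ⟨h1, h2⟩; exact ⟨h1, sInf_le ⟨h1, h2⟩⟩

lemma mem_radTS_span_self (a : R) : a ∈ (span {a}).radTS := by
  rw [radTS, mem_sInf]
  exact fun P hP => hP.2 (subset_span rfl)

end TwoSidedIdeal

open TwoSidedIdeal in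
/-- If every prime two-sided ideal of `R` is completely prime and `x` is a frame
homomorphism from the frame of radical two-sided ideals of `R` to `2`, then
`I_x := ⨆ {I ∈ Rad(R) | x(I) = 0}` is a prime two-sided ideal of `R`. -/
theorem point_sup_isPrime {R : Type*} [Ring R]
    (hcp : ∀ P : TwoSidedIdeal R, P.IsPrimeTS → P.IsCompletelyPrimeTS)
    (p : TwoSidedIdeal R → Prop) (hp : IsRadPointTS p) :
    (sSup {I : TwoSidedIdeal R | I.radTS = I ∧ ¬ p I}).radTS.IsPrimeTS := by
  obtain ⟨hptop, hpmeet, hpjoin⟩ := hp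
  set S := {I : TwoSidedIdeal R | I.radTS = I ∧ ¬ p I} with hS
  set Ix := (sSup S).radTS with hIx
  have hrad : Ix.radTS = Ix := radTS_idem _
  have hnp : ¬ p Ix := by
    rw [hIx, hpjoin S (fun I hI => hI.1)]
    rintro ⟨I, hI, hpI⟩; exact hI.2 hpI
  have hne : Ix ≠ ⊤ := fun h => hnp (h ▸ hptop)
  -- `p` is "monotone": a radical ideal with `p J` cannot sit inside `Ix`
  have hmono : ∀ J : TwoSidedIdeal R, J.radTS = J → p J → ¬ J ≤ Ix := by
    intro J hJ hpJ hle
    have : p (J ⊓ Ix) := by rwa [inf_eq_left.mpr hle]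
    exact hnp ((hpmeet J Ix hJ hrad).mp this).2
  -- Ix is completely prime
  have hcpIx : ∀ a b : R, a * b ∈ Ix → a ∈ Ix ∨ b ∈ Ix := by
    intro a b hab
    by_contra hc
    push_neg at hc
    obtain ⟨ha, hb⟩ := hc
    set A := (span ({a} : Set R)).radTS with hA
    set B := (span ({b} : Set R)).radTS with hB
    have hAS : p A := by
      by_contra hpA
      exact ha <| ((le_sSup (show A ∈ S from ⟨radTS_idem _, hpA⟩)).trans
        (le_radTS _)) (mem_radTS_span_self a)
    have hBS : p B := by
      by_contra hpB
      exact hb <| ((le_sSup (show B ∈ S from ⟨radTS_idem _, hpB⟩)).trans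
        (le_radTS _)) (mem_radTS_span_self b)
    have hABrad : (A ⊓ B).radTS = A ⊓ B :=
      le_antisymm (le_inf ((radTS_mono inf_le_left).trans (radTS_idem _).le)
        ((radTS_mono inf_le_right).trans (radTS_idem _).le)) (le_radTS _)
    have hpAB : p (A ⊓ B) := (hpmeet A B (radTS_idem _) (radTS_idem _)).mpr ⟨hAS, hBS⟩
    -- but A ⊓ B ≤ Ix
    have hle : A ⊓ B ≤ Ix := by
      rw [hIx, radTS]
      refine le_sInf fun P hP => ?_
      have habP : a * b ∈ P := by
        have : a * b ∈ Ix := hab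
        rw [hIx, radTS, mem_sInf] at this
        exact this P hP
      rcases (hcp P hP.1).2 a b habP with h | h
      · refine inf_le_left.trans (radTS_le_of_prime hP.1 ?_)
        intro x hx
        exact mem_span_iff.mp hx P (by simpa using h)
      · refine inf_le_right.trans (radTS_le_of_prime hP.1 ?_)
        intro x hx
        exact mem_span_iff.mp hx P (by simpa using h)
    exact hmono (A ⊓ B) hABrad hpAB hle
  -- completely prime implies prime
  refine ⟨hne, fun A B hAB => ?_⟩
  by_contra hc
  push_neg at hc
  obtain ⟨hA, hB⟩ := hc
  obtain ⟨a, haA, haP⟩ := SetLike.not_le_iff_exists.mp hA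
  obtain ⟨b, hbB, hbP⟩ := SetLike.not_le_iff_exists.mp hB
  rcases hcpIx a b (hAB a haA b hbB) with h | h
  · exact haP h
  · exact hbP h
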